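/- Every polar algebra is a radial Hsiang algebra with θ = 4/3: for all x = x₀ + x₁ with x₀ ∈ A₀, x₁ ∈ A₁, it satisfies h(x², x³) = (4/3)·h(x,x)·h(x², x). -/
import Mathlib


/-- Every polar algebra is a radial Hsiang algebra with `θ = 4/3`:
for all `x = x₀ + x₁` with `x₀ ∈ A₀`, `x₁ ∈ A₁`, `h(x²,x³) = (4/3)·h(x,x)·h(x²,x)`. -/
theorem polar_is_radial_hsiang
    {A : Type*} [AddCommGroup A] [Module ℝ A] [FiniteDimensional ℝ A]
    (mul : A →ₗ[ℝ] A →ₗ[ℝ] A)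
    (hcomm : ∀ x y : A, mul x y = mul y x)
    (h : A →ₗ[ℝ] A →ₗ[ℝ] ℝ)
    (hsymm : ∀ x y : A, h x y = h y x)
    (hpos : ∀ x : A, x ≠ 0 → 0 < h x x)
    (hinv : ∀ x y z : A, h (mul x y) z = h x (mul y z))
    (A₀ A₁ : Submodule ℝ A)
    (hA₀ : A₀ ≠ ⊥) (hA₁ : A₁ ≠ ⊥)
    (hsum : A₀ ⊔ A₁ = ⊤) (hind : A₀ ⊓ A₁ = ⊥)
    (horth : ∀ x ∈ A₀, ∀ y ∈ A₁, h x y = 0)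
    (hmul00 : ∀ x ∈ A₀, ∀ y ∈ A₀, mul x y = 0)
    (hmul11 : ∀ x ∈ A₁, ∀ y ∈ A₁, mul x y ∈ A₀)
    (hpolar : ∀ x ∈ A₀, ∀ y ∈ A₁, mul x (mul x y) = h x x • y)
    (htr : Module.finrank ℝ A₀ = 1 → ∀ x ∈ A₀, LinearMap.trace ℝ A (mul x) = 0) :
    ∀ x₀ ∈ A₀, ∀ x₁ ∈ A₁,
      h (mul (x₀ + x₁) (x₀ + x₁)) (mul (mul (x₀ + x₁) (x₀ + x₁)) (x₀ + x₁))
        = (4 / 3) * h (x₀ + x₁) (x₀ + x₁) * h (mul (x₀ + x₁) (x₀ + x₁)) (x₀ + x₁) := by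
  intro x₀ hx₀ x₁ hx₁
  set u := mul x₀ x₁ with hu
  set c := mul x₁ x₁ with hc
  have hcmem : c ∈ A₀ := hmul11 x₁ hx₁ x₁ hx₁
  -- any vector orthogonal to A₀ lies in A₁
  have mem_right : ∀ v : A, (∀ z ∈ A₀, h z v = 0) → v ∈ A₁ := by
    intro v hv
    have hv' : v ∈ A₀ ⊔ A₁ := by rw [hsum]; exact Submodule.mem_top
    obtain ⟨y, hy, z, hz, hyz⟩ := Submodule.mem_sup.mp hv'
    have h1 : h y v = 0 := hv y hy
    have h2 : h y v = h y y := by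
      rw [← hyz, map_add, horth y hy z hz, add_zero]
    have hy0 : y = 0 := by
      by_contra hne
      have := hpos y hne
      rw [h2] at h1; linarith
    rw [← hyz, hy0, zero_add]; exact hz
  have humem : u ∈ A₁ := by
    apply mem_right
    intro z hz
    rw [hu, ← hinv z x₀ x₁, hmul00 z hz x₀ hx₀, map_zero, LinearMap.zero_apply]
  -- scalar facts
  have hub : h u x₁ = h x₀ c := hinv x₀ x₁ x₁
  have hua : h u x₀ = 0 := by rw [hsymm]; exact horth x₀ hx₀ u humem
  have hcb : h c x₁ = 0 := horth c hcmem x₁ hx₁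
  have hab : h x₀ x₁ = 0 := horth x₀ hx₀ x₁ hx₁
  have huub : h u (mul u x₁) = 0 := by
    rw [← hinv u u x₁]
    exact horth (mul u u) (hmul11 u humem u humem) x₁ hx₁
  have hccb : h c (mul c x₁) = 0 := by
    rw [← hinv c c x₁, hmul00 c hcmem c hcmem, map_zero, LinearMap.zero_apply]
  -- polarization identity gives the key value
  have hucb : h u (mul c x₁) = h x₀ c * h x₁ x₁ := by
    have e := hpolar (x₀ + c) (Submodule.add_mem A₀ hx₀ hcmem) x₁ hx₁
    have e0 := hpolar x₀ hx₀ x₁ hx₁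
    have e1 := hpolar c hcmem x₁ hx₁
    simp only [map_add, LinearMap.add_apply] at e
    rw [e0, e1] at e
    have happ := congrArg (fun w => h x₁ w) e
    simp only [map_add, map_smul, smul_eq_mul] at happ
    have t1 : h x₁ (mul x₀ (mul c x₁)) = h u (mul c x₁) := by
      rw [← hinv x₁ x₀ (mul c x₁), hcomm x₁ x₀, ← hu]
    have t2 : h x₁ (mul c u) = h u (mul c x₁) := by
      rw [← hinv x₁ c u, hcomm x₁ c, hsymm]
    rw [t1, t2, hsymm c x₀] at happ
    nlinarith [happ]
  have hcub : h c (mul u x₁) = h x₀ c * h x₁ x₁ := by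
    rw [hsymm c (mul u x₁), hinv u x₁ c, hcomm x₁ c]
    exact hucb
  -- expand the square and cube
  have e2 : mul (x₀ + x₁) (x₀ + x₁) = u + u + c := by
    simp only [map_add, LinearMap.add_apply]
    rw [hmul00 x₀ hx₀ x₀ hx₀, hcomm x₁ x₀, ← hu, ← hc]
    abel
  have e3 : mul (u + u + c) (x₀ + x₁)
      = h x₀ x₀ • x₁ + h x₀ x₀ • x₁ + (mul u x₁ + mul u x₁ + mul c x₁) := by
    simp only [map_add, LinearMap.add_apply]
    rw [hcomm u x₀, hu, hpolar x₀ hx₀ x₁ hx₁, ← hu, hcomm c x₀, hmul00 x₀ hx₀ c hcmem]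
    abel
  rw [e2, e3]
  simp only [map_add, LinearMap.add_apply, map_smul, smul_eq_mul]
  have hba : h x₁ x₀ = 0 := by rw [hsymm]; exact hab
  rw [hub, hua, huub, hucb, hccb, hcub, hcb, hab, hba, hsymm c x₀]
  ring
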